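/- arXiv:1810.08826 — 4 statements merged into one kernel-verified Lean document; each statement's English description precedes it below -/
import Mathlib

section
/- Define s(u, μ) = 1 − u·φ(μ)/φ(Φ⁻¹(Φ(μ)·u)) for u ∈ (0,1) and μ ∈ ℝ, where φ and Φ are the standard normal density and CDF. Then s(u, μ) ∈ (0,1) for all u ∈ (0,1) and μ ∈ ℝ. -/
open MeasureTheory

/-- Standard normal density `φ`. -/
noncomputable def stdNormalPDF (x : ℝ) : ℝ :=
  (Real.sqrt (2 * Real.pi))⁻¹ * Real.exp (-(x ^ 2) / 2)

/-- Standard normal CDF `Φ`. -/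
noncomputable def stdNormalCDF (x : ℝ) : ℝ := ∫ t in Set.Iic x, stdNormalPDF t

/-- Inverse of the standard normal CDF, `Φ⁻¹` (defined via `Function.invFun`;
this is the genuine inverse on `(0,1)` since `Φ` is a strictly monotone bijection
onto `(0,1)`). -/
noncomputable def stdNormalCDFInv : ℝ → ℝ := Function.invFun stdNormalCDF

open Filter Set Real


lemma pdf_pos (x : ℝ) : 0 < stdNormalPDF x := by
  have : 0 < Real.sqrt (2 * Real.pi) := Real.sqrt_pos.2 (by positivity)
  exact mul_pos (inv_pos.2 this) (Real.exp_pos _)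

lemma pdf_cont : Continuous stdNormalPDF := by
  unfold stdNormalPDF; fun_prop

lemma pdf_integrable : Integrable stdNormalPDF := by
  have h : Integrable (fun x : ℝ => Real.exp (-(1/2 : ℝ) * x ^ 2)) :=
    integrable_exp_neg_mul_sq (by norm_num)
  have h2 := h.const_mul (Real.sqrt (2 * Real.pi))⁻¹
  refine h2.congr ?_
  filter_upwards with x
  show _ = stdNormalPDF x
  unfold stdNormalPDF
  ring_nf

lemma hasDerivAt_pdf (x : ℝ) : HasDerivAt stdNormalPDF (-x * stdNormalPDF x) x := by
  have h1 : HasDerivAt (fun x : ℝ => -(x ^ 2) / 2) (-x) x := by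
    have := ((hasDerivAt_pow 2 x).neg).div_const 2
    refine this.congr_deriv ?_; ring
  have h2 := (h1.exp).const_mul (Real.sqrt (2 * Real.pi))⁻¹
  unfold stdNormalPDF
  refine h2.congr_deriv ?_
  ring

lemma hasDerivAt_cdf (x : ℝ) : HasDerivAt stdNormalCDF (stdNormalPDF x) x := by
  have hint : ∀ a b : ℝ, IntervalIntegrable stdNormalPDF volume a b :=
    fun a b => pdf_integrable.intervalIntegrable
  have h := intervalIntegral.integral_hasDerivAt_right (hint 0 x)
    (pdf_cont.aestronglyMeasurable.stronglyMeasurableAtFilter) (pdf_cont.continuousAt)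
  have heq : ∀ y : ℝ, stdNormalCDF y = stdNormalCDF 0 + ∫ t in (0:ℝ)..y, stdNormalPDF t := by
    intro y
    rw [← intervalIntegral.integral_Iic_sub_Iic (pdf_integrable.integrableOn)
      (pdf_integrable.integrableOn)]
    unfold stdNormalCDF; ring
  have := (h.const_add (stdNormalCDF 0))
  exact this.congr_of_eventuallyEq (Filter.Eventually.of_forall fun y => (heq y))

lemma cdf_strictMono : StrictMono stdNormalCDF :=
  strictMono_of_hasDerivAt_pos hasDerivAt_cdf pdf_pos

lemma cdf_nonneg (x : ℝ) : 0 ≤ stdNormalCDF x :=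
  setIntegral_nonneg measurableSet_Iic (fun t _ => (pdf_pos t).le)

lemma cdf_pos (x : ℝ) : 0 < stdNormalCDF x :=
  lt_of_le_of_lt (cdf_nonneg (x - 1)) (cdf_strictMono (by linarith))

lemma integral_pdf : ∫ x, stdNormalPDF x = 1 := by
  have h : ∫ x : ℝ, Real.exp (-(1/2 : ℝ) * x ^ 2) = Real.sqrt (Real.pi / (1/2)) :=
    integral_gaussian (1/2)
  have : ∫ x, stdNormalPDF x = (Real.sqrt (2 * Real.pi))⁻¹ * ∫ x : ℝ, Real.exp (-(1/2 : ℝ) * x ^ 2) := by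
    rw [← integral_const_mul]
    congr 1; funext x; unfold stdNormalPDF; ring_nf
  rw [this, h]
  rw [show Real.pi / (1/2) = 2 * Real.pi by ring]
  exact inv_mul_cancel₀ (ne_of_gt (Real.sqrt_pos.2 (by positivity)))

lemma cdf_lt_one (x : ℝ) : stdNormalCDF x < 1 := by
  have h1 : stdNormalCDF x < stdNormalCDF (x + 1) := cdf_strictMono (by linarith)
  have h2 : stdNormalCDF (x + 1) ≤ 1 := by
    have := intervalIntegral.integral_Iic_add_Ioi (b := x + 1)
      (pdf_integrable.integrableOn) (pdf_integrable.integrableOn)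
    have hnn : 0 ≤ ∫ t in Set.Ioi (x+1), stdNormalPDF t :=
      setIntegral_nonneg measurableSet_Ioi (fun t _ => (pdf_pos t).le)
    have : stdNormalCDF (x+1) + ∫ t in Set.Ioi (x+1), stdNormalPDF t = 1 := by
      rw [← integral_pdf] at *; exact this
    linarith
  linarith

lemma cdf_le_exp {x : ℝ} (hx : x ≤ -2) :
    stdNormalCDF x ≤ (Real.sqrt (2 * Real.pi))⁻¹ * Real.exp x := by
  have hmono : ∀ t ∈ Set.Iic x, stdNormalPDF t ≤ (Real.sqrt (2 * Real.pi))⁻¹ * Real.exp t := by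
    intro t ht
    simp only [Set.mem_Iic] at ht
    have ht2 : t ≤ -2 := le_trans ht hx
    have : -(t ^ 2) / 2 ≤ t := by nlinarith
    exact mul_le_mul_of_nonneg_left (Real.exp_le_exp.2 this) (by positivity)
  have hint2 : IntegrableOn (fun t => (Real.sqrt (2 * Real.pi))⁻¹ * Real.exp t) (Set.Iic x) :=
    (integrableOn_exp_Iic x).const_mul _
  calc stdNormalCDF x ≤ ∫ t in Set.Iic x, (Real.sqrt (2 * Real.pi))⁻¹ * Real.exp t :=
        setIntegral_mono_on (pdf_integrable.integrableOn) hint2 measurableSet_Iic hmono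
    _ = (Real.sqrt (2 * Real.pi))⁻¹ * Real.exp x := by
        rw [integral_const_mul, integral_exp_Iic]

lemma cdf_tendsto_atBot : Tendsto stdNormalCDF atBot (nhds 0) := by
  have hub : ∀ᶠ x in atBot, stdNormalCDF x ≤ (Real.sqrt (2 * Real.pi))⁻¹ * Real.exp x := by
    filter_upwards [eventually_le_atBot (-2 : ℝ)] with x hx using cdf_le_exp hx
  have hlb : ∀ᶠ x in atBot, (0:ℝ) ≤ stdNormalCDF x := Eventually.of_forall cdf_nonneg
  have h : Tendsto (fun x : ℝ => (Real.sqrt (2 * Real.pi))⁻¹ * Real.exp x) atBot (nhds 0) := by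
    have := Real.tendsto_exp_atBot.const_mul (Real.sqrt (2 * Real.pi))⁻¹
    simpa using this
  exact tendsto_of_tendsto_of_tendsto_of_le_of_le' tendsto_const_nhds h hlb hub

lemma pdf_tendsto_atBot : Tendsto stdNormalPDF atBot (nhds 0) := by
  have h1 : Tendsto (fun x : ℝ => -x) atBot atTop := tendsto_neg_atBot_atTop
  have h2 : Tendsto (fun y : ℝ => y ^ 2) atTop atTop := tendsto_pow_atTop two_ne_zero
  have hsq : Tendsto (fun x : ℝ => x ^ 2) atBot atTop := by
    refine (h2.comp h1).congr fun x => ?_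
    simp [Function.comp, neg_sq]
  have h : Tendsto (fun x : ℝ => -(x ^ 2) / 2) atBot atBot :=
    (tendsto_neg_atTop_atBot.comp hsq).atBot_div_const (by norm_num)
  have h3 := ((Real.tendsto_exp_atBot.comp h).const_mul (Real.sqrt (2 * Real.pi))⁻¹)
  rw [mul_zero] at h3
  refine h3.congr fun x => ?_
  simp only [Function.comp, stdNormalPDF]


lemma hasDerivAt_h (x : ℝ) :
    HasDerivAt (fun x => x * stdNormalCDF x + stdNormalPDF x) (stdNormalCDF x) x := by
  have h1 := (hasDerivAt_id x).mul (hasDerivAt_cdf x)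
  have h2 := (h1.add (hasDerivAt_pdf x))
  refine h2.congr_deriv ?_
  simp only [id_eq]
  ring

lemma h_strictMono : StrictMono (fun x => x * stdNormalCDF x + stdNormalPDF x) :=
  strictMono_of_hasDerivAt_pos hasDerivAt_h cdf_pos

lemma h_tendsto : Tendsto (fun x => x * stdNormalCDF x + stdNormalPDF x) atBot (nhds 0) := by
  have hx : Tendsto (fun x : ℝ => x * stdNormalCDF x) atBot (nhds 0) := by
    have hub : ∀ᶠ x in atBot, x * stdNormalCDF x ≤ 0 := by
      filter_upwards [eventually_le_atBot (0 : ℝ)] with x hx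
      exact mul_nonpos_of_nonpos_of_nonneg hx (cdf_nonneg x)
    have hlb : ∀ᶠ x in atBot, x * ((Real.sqrt (2 * Real.pi))⁻¹ * Real.exp x) ≤ x * stdNormalCDF x := by
      filter_upwards [eventually_le_atBot (-2 : ℝ)] with x hx
      exact mul_le_mul_of_nonpos_left (cdf_le_exp hx) (by linarith)
    have hexp : Tendsto (fun x : ℝ => x * ((Real.sqrt (2 * Real.pi))⁻¹ * Real.exp x)) atBot (nhds 0) := by
      have hbase : Tendsto (fun y : ℝ => y ^ 1 * Real.exp (-y)) atTop (nhds 0) :=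
        tendsto_pow_mul_exp_neg_atTop_nhds_zero 1
      have := ((hbase.comp tendsto_neg_atBot_atTop).neg).const_mul (Real.sqrt (2 * Real.pi))⁻¹
      rw [neg_zero, mul_zero] at this
      refine this.congr fun x => ?_
      simp only [Function.comp, pow_one, neg_neg]
      ring
    exact tendsto_of_tendsto_of_tendsto_of_le_of_le' hexp tendsto_const_nhds hlb hub
  have := hx.add pdf_tendsto_atBot
  simpa using this

lemma mill_pos (x : ℝ) : 0 < x * stdNormalCDF x + stdNormalPDF x := by
  set h : ℝ → ℝ := fun x => x * stdNormalCDF x + stdNormalPDF x with hh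
  have hnn : ∀ y, 0 ≤ h y := by
    intro y
    refine le_of_tendsto h_tendsto ?_
    filter_upwards [eventually_le_atBot y] with z hz
    exact (h_strictMono.monotone hz)
  calc (0:ℝ) ≤ h (x - 1) := hnn _
    _ < h x := h_strictMono (by linarith)

lemma mill_strictAnti : StrictAnti (fun x => stdNormalPDF x / stdNormalCDF x) := by
  apply strictAnti_of_hasDerivAt_neg (f' := fun x =>
    ((-x * stdNormalPDF x) * stdNormalCDF x - stdNormalPDF x * stdNormalPDF x) / (stdNormalCDF x) ^ 2)
  · intro x
    exact (hasDerivAt_pdf x).div (hasDerivAt_cdf x) (ne_of_gt (cdf_pos x))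
  · intro x
    apply div_neg_of_neg_of_pos
    · have := mill_pos x
      have hp := pdf_pos x
      nlinarith
    · exact pow_pos (cdf_pos x) 2

lemma cdf_cont : Continuous stdNormalCDF :=
  continuous_iff_continuousAt.2 fun x => (hasDerivAt_cdf x).continuousAt

lemma cdf_inv_eq {v : ℝ} (hv0 : 0 < v) {μ : ℝ} (hvμ : v < stdNormalCDF μ) :
    stdNormalCDF (stdNormalCDFInv v) = v := by
  have hlow : ∀ᶠ a in atBot, stdNormalCDF a < v :=
    cdf_tendsto_atBot.eventually_lt_const hv0
  obtain ⟨a, ha⟩ := hlow.exists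
  have haμ : a ≤ μ := le_of_lt (cdf_strictMono.lt_iff_lt.mp (lt_trans ha hvμ))
  have := intermediate_value_Icc haμ (cdf_cont.continuousOn)
  have hvmem : v ∈ Set.Icc (stdNormalCDF a) (stdNormalCDF μ) := ⟨ha.le, hvμ.le⟩
  obtain ⟨x, _, hx⟩ := this hvmem
  exact Function.invFun_eq ⟨x, hx⟩

/-- `s(u,μ) = 1 - u·φ(μ)/φ(Φ⁻¹(Φ(μ)·u))`. -/
noncomputable def sFun (u μ : ℝ) : ℝ :=
  1 - u * stdNormalPDF μ / stdNormalPDF (stdNormalCDFInv (stdNormalCDF μ * u))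

/-- `s(u,μ) ∈ (0,1)` for all `u ∈ (0,1)` and `μ ∈ ℝ`. -/
theorem stmt_4 (u μ : ℝ) (hu : u ∈ Set.Ioo (0 : ℝ) 1) :
    sFun u μ ∈ Set.Ioo (0 : ℝ) 1 := by
  obtain ⟨hu0, hu1⟩ := hu
  have hΦμ := cdf_pos μ
  have hφμ := pdf_pos μ
  have hv0 : 0 < stdNormalCDF μ * u := mul_pos hΦμ hu0
  have hvμ : stdNormalCDF μ * u < stdNormalCDF μ := by nlinarith
  set y := stdNormalCDFInv (stdNormalCDF μ * u) with hy
  have hΦy : stdNormalCDF y = stdNormalCDF μ * u := cdf_inv_eq hv0 hvμ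
  have hφy := pdf_pos y
  have hΦyp := cdf_pos y
  have hyμ : y < μ := by
    apply cdf_strictMono.lt_iff_lt.mp
    rw [hΦy]; exact hvμ
  have hmill := mill_strictAnti hyμ
  simp only at hmill
  have hkey : u * stdNormalPDF μ < stdNormalPDF y := by
    rw [div_lt_div_iff₀ hΦμ hΦyp] at hmill
    rw [hΦy] at hmill
    nlinarith
  constructor
  · have : u * stdNormalPDF μ / stdNormalPDF y < 1 := (div_lt_one hφy).2 hkey
    simp only [sFun, ← hy]
    linarith
  · have : 0 < u * stdNormalPDF μ / stdNormalPDF y := by positivity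
    simp only [sFun, ← hy]
    linarith
end

section
/- For δ ∈ [0,1] and a nonzero vector α₀ ∈ ℝ^p, define J(α₀, δ) = {β ∈ ℝ^p : α₀ᵀβ ≥ δ‖α₀‖₂‖β‖₂}. If α ∈ J(α₀, sqrt(1−δ²)) and β ∈ J(α₀, δ), then αᵀβ ≥ 0. -/
/-!
Measure everything by unoriented angles. With `δ = cos φ`, the two hypotheses say that `α` lies
within angle `π/2 - φ` of `α₀` and `β` within angle `φ` of `α₀`, so by the triangle inequality
for angles `α` and `β` are at most a right angle apart.
-/

open scoped RealInnerProductSpace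
open Real InnerProductGeometry

namespace InnerProductGeometry

variable {V : Type*} [NormedAddCommGroup V] [InnerProductSpace ℝ V]

theorem angle_le_arccos_of_mul_norm_mul_norm_le {x y : V} (hx : x ≠ 0) (hy : y ≠ 0) {c : ℝ}
    (h : c * ‖x‖ * ‖y‖ ≤ ⟪x, y⟫) : angle x y ≤ arccos c := by
  refine arccos_le_arccos ?_
  rw [le_div_iff₀ (by positivity), ← mul_assoc]
  exact h

theorem inner_nonneg_of_angle_le_pi_div_two {x y : V} (h : angle x y ≤ π / 2) :
    0 ≤ ⟪x, y⟫ := by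
  rw [← cos_angle_mul_norm_mul_norm]
  exact mul_nonneg (cos_nonneg_of_mem_Icc ⟨by linarith [pi_pos, angle_nonneg x y], h⟩)
    (by positivity)

end InnerProductGeometry

theorem Real.arccos_sqrt_one_sub_sq_add_arccos {δ : ℝ} (hδ : 0 ≤ δ) :
    arccos √(1 - δ ^ 2) + arccos δ = π / 2 := by
  rw [arccos_eq_arcsin hδ, arccos_eq_pi_div_two_sub_arcsin]
  ring

/-- If `α` lies in the cone `J(α₀, √(1-δ²))` and `β` lies in the cone `J(α₀, δ)`,
where `J(α₀, c) = {v : ⟪α₀, v⟫ ≥ c‖α₀‖‖v‖}`, then `⟪α, β⟫ ≥ 0`. -/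
theorem stmt_11 {p : ℕ} (δ : ℝ) (hδ : δ ∈ Set.Icc (0 : ℝ) 1)
    (α₀ : EuclideanSpace ℝ (Fin p)) (hα₀ : α₀ ≠ 0)
    (α β : EuclideanSpace ℝ (Fin p))
    (hα : ⟪α₀, α⟫ ≥ Real.sqrt (1 - δ ^ 2) * ‖α₀‖ * ‖α‖)
    (hβ : ⟪α₀, β⟫ ≥ δ * ‖α₀‖ * ‖β‖) :
    ⟪α, β⟫ ≥ 0 := by
  rcases eq_or_ne α 0 with rfl | hα0
  · simp
  rcases eq_or_ne β 0 with rfl | hβ0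
  · simp
  refine inner_nonneg_of_angle_le_pi_div_two ?_
  calc angle α β ≤ angle α α₀ + angle α₀ β := angle_le_angle_add_angle α α₀ β
    _ ≤ arccos √(1 - δ ^ 2) + arccos δ := by
      rw [angle_comm α α₀]
      gcongr
      · exact angle_le_arccos_of_mul_norm_mul_norm_le hα₀ hα0 hα
      · exact angle_le_arccos_of_mul_norm_mul_norm_le hα₀ hβ0 hβ
    _ = π / 2 := arccos_sqrt_one_sub_sq_add_arccos hδ.1
end

section
/- Let γ(p) = 1 − (1 + 4^{-p/3})^{-p/2} · exp(−p·4^{p/3}(1 + 4^{p/3}) / (2(4^p − 1))). Then lim_{p→∞} γ(p)^{1/p} = 4^{-1/3}. -/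
/-!
Write `x = 4^{-p/3}` and `γ(p) = 1 - A·B` with `A = (1 + x)^{-p/2}` and `B = exp(-t)`. Since
`log (1 + x) ≤ x` we get `1 - A ≤ p x / 2`, and with `y = 4^{p/3}` the exponent
`t = p y (1 + y) / (2 (y³ - 1))` lies between `p x / 2` and `2 p x` once `y³ = 4^p ≥ 4`.
Hence `x / 4 ≤ γ(p) ≤ 3 p x` for `p ≥ 1`, and the `p`-th roots of both bounds tend to `4^{-1/3}`
because `(1/4)^{1/p} → 1` and `(3p)^{1/p} → 1`.
-/

open Filter Topology Real

lemma one_sub_one_add_rpow_neg_le {x s : ℝ} (hx : 0 ≤ x) (hs : 0 ≤ s) :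
    1 - (1 + x) ^ (-s) ≤ s * x := by
  have hlog : log (1 + x) ≤ x := by linarith [log_le_sub_one_of_pos (by linarith : 0 < 1 + x)]
  rw [rpow_def_of_pos (by linarith)]
  nlinarith [add_one_le_exp (log (1 + x) * -s)]

lemma div_le_one_sub_exp_neg {t : ℝ} (ht : 0 ≤ t) : t / (1 + t) ≤ 1 - exp (-t) := by
  have hexp : exp (-t) ≤ (1 + t)⁻¹ := by
    rw [exp_neg]
    exact inv_anti₀ (by linarith) (by linarith [add_one_le_exp t])
  have hdiv : t / (1 + t) = 1 - (1 + t)⁻¹ := by field_simp; ring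
  linarith

lemma inv_div_two_le_mul_one_add_div {y : ℝ} (hy : 0 < y) (hy3 : 4 ≤ y ^ 3) :
    y⁻¹ / 2 ≤ y * (1 + y) / (2 * (y ^ 3 - 1)) := by
  rw [div_le_div_iff₀ (by norm_num) (by linarith), inv_mul_le_iff₀ hy]
  nlinarith

lemma mul_one_add_div_le_two_mul_inv {y : ℝ} (hy : 0 < y) (hy3 : 4 ≤ y ^ 3) :
    y * (1 + y) / (2 * (y ^ 3 - 1)) ≤ 2 * y⁻¹ := by
  have hy1 : 1 ≤ y := by nlinarith [sq_nonneg (y - 1), sq_nonneg y]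
  rw [div_le_iff₀ (by linarith), ← div_eq_mul_inv, div_mul_eq_mul_div, le_div_iff₀ hy]
  nlinarith [mul_le_mul_of_nonneg_left hy1 (sq_nonneg y)]

lemma tendsto_const_rpow_one_div_atTop {a : ℝ} (ha : 0 < a) :
    Tendsto (fun p : ℝ => a ^ (1 / p)) atTop (𝓝 1) := by
  simpa [Function.comp_def] using
    (continuousAt_const_rpow (b := 0) ha.ne').tendsto.comp tendsto_inv_atTop_zero

lemma mul_rpow_pow_one_div {a r p : ℝ} (ha : 0 ≤ a) (hr : 0 ≤ r) (hp : p ≠ 0) :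
    (a * r ^ p) ^ (1 / p) = a ^ (1 / p) * r := by
  rw [mul_rpow ha (by positivity), one_div, rpow_rpow_inv hr hp]

lemma tendsto_rpow_one_div_of_le_of_le {f : ℝ → ℝ} {r c C : ℝ} (hr : 0 < r) (hc : 0 < c)
    (hC : 0 < C) (hlo : ∀ᶠ p in atTop, c * r ^ p ≤ f p)
    (hhi : ∀ᶠ p in atTop, f p ≤ C * p * r ^ p) :
    Tendsto (fun p => f p ^ (1 / p)) atTop (𝓝 r) := by
  have hlim_lo : Tendsto (fun p : ℝ => c ^ (1 / p) * r) atTop (𝓝 r) := by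
    simpa using (tendsto_const_rpow_one_div_atTop hc).mul_const r
  have hlim_hi : Tendsto (fun p : ℝ => C ^ (1 / p) * p ^ (1 / p) * r) atTop (𝓝 r) := by
    simpa using ((tendsto_const_rpow_one_div_atTop hC).mul tendsto_rpow_div).mul_const r
  refine tendsto_of_tendsto_of_tendsto_of_le_of_le' hlim_lo hlim_hi ?_ ?_
  · filter_upwards [hlo, eventually_gt_atTop 0] with p hfp hp
    rw [← mul_rpow_pow_one_div hc.le hr.le hp.ne']
    exact rpow_le_rpow (by positivity) hfp (by positivity)
  · filter_upwards [hlo, hhi, eventually_gt_atTop 0] with p hfp hfp' hp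
    rw [← mul_rpow hC.le hp.le, ← mul_rpow_pow_one_div (by positivity) hr.le hp.ne']
    exact rpow_le_rpow (le_trans (by positivity) hfp) hfp' (by positivity)

noncomputable def gamma (p : ℝ) : ℝ :=
  1 - (1 + (4 : ℝ) ^ (-p / 3)) ^ (-p / 2) *
    exp (-p * (4 : ℝ) ^ (p / 3) * (1 + (4 : ℝ) ^ (p / 3)) / (2 * ((4 : ℝ) ^ p - 1)))

noncomputable def gammaExponent (p : ℝ) : ℝ :=
  p * (4 : ℝ) ^ (p / 3) * (1 + (4 : ℝ) ^ (p / 3)) / (2 * ((4 : ℝ) ^ p - 1))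

lemma gamma_eq (p : ℝ) :
    gamma p = 1 - (1 + (4 : ℝ) ^ (-p / 3)) ^ (-p / 2) * exp (-gammaExponent p) := by
  rw [gamma, gammaExponent, neg_mul, neg_mul, neg_div (2 * ((4 : ℝ) ^ p - 1))]

lemma four_rpow_eq_cube (p : ℝ) : (4 : ℝ) ^ p = ((4 : ℝ) ^ (p / 3)) ^ 3 := by
  rw [← rpow_natCast, ← rpow_mul (by norm_num)]
  norm_num

lemma four_rpow_neg_div_three (p : ℝ) : (4 : ℝ) ^ (-p / 3) = ((4 : ℝ) ^ (p / 3))⁻¹ := by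
  rw [neg_div, rpow_neg (by norm_num)]

lemma four_le_four_rpow_div_three_cube {p : ℝ} (hp : 1 ≤ p) : 4 ≤ ((4 : ℝ) ^ (p / 3)) ^ 3 := by
  rw [← four_rpow_eq_cube]
  simpa using rpow_le_rpow_of_exponent_le (by norm_num : (1 : ℝ) ≤ 4) hp

lemma gammaExponent_eq (p : ℝ) :
    gammaExponent p = p * ((4 : ℝ) ^ (p / 3) * (1 + (4 : ℝ) ^ (p / 3)) /
      (2 * (((4 : ℝ) ^ (p / 3)) ^ 3 - 1))) := by
  rw [gammaExponent, four_rpow_eq_cube p, mul_assoc, mul_div_assoc]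

lemma le_gammaExponent {p : ℝ} (hp : 1 ≤ p) : p / 2 * (4 : ℝ) ^ (-p / 3) ≤ gammaExponent p := by
  rw [gammaExponent_eq, four_rpow_neg_div_three, mul_comm_div, div_eq_mul_inv]
  exact mul_le_mul_of_nonneg_left
    (inv_div_two_le_mul_one_add_div (by positivity) (four_le_four_rpow_div_three_cube hp))
    (by linarith)

lemma gammaExponent_le {p : ℝ} (hp : 1 ≤ p) : gammaExponent p ≤ 2 * p * (4 : ℝ) ^ (-p / 3) := by
  rw [gammaExponent_eq, four_rpow_neg_div_three, mul_comm 2 p, mul_assoc]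
  exact mul_le_mul_of_nonneg_left
    (mul_one_add_div_le_two_mul_inv (by positivity) (four_le_four_rpow_div_three_cube hp))
    (by linarith)

lemma gamma_le {p : ℝ} (hp : 1 ≤ p) : gamma p ≤ 3 * p * (4 : ℝ) ^ (-p / 3) := by
  set x := (4 : ℝ) ^ (-p / 3)
  have hx : 0 ≤ x := by positivity
  have hA : 1 - (1 + x) ^ (-p / 2) ≤ p / 2 * x := by
    rw [neg_div]; exact one_sub_one_add_rpow_neg_le hx (by linarith)
  have hA0 : 0 ≤ (1 + x) ^ (-p / 2) := by positivity
  have hA1 : (1 + x) ^ (-p / 2) ≤ 1 := rpow_le_one_of_one_le_of_nonpos (by linarith) (by linarith)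
  have hB : 1 - exp (-gammaExponent p) ≤ 2 * p * x := by
    linarith [one_sub_le_exp_neg (gammaExponent p), gammaExponent_le hp]
  have hB1 : exp (-gammaExponent p) ≤ 1 :=
    exp_le_one_iff.2 (by linarith [le_gammaExponent hp, mul_nonneg (by linarith : 0 ≤ p / 2) hx])
  rw [gamma_eq]
  nlinarith [mul_le_mul_of_nonneg_right hA1 (sub_nonneg.2 hB1)]

lemma le_gamma {p : ℝ} (hp : 1 ≤ p) : (4 : ℝ) ^ (-p / 3) / 4 ≤ gamma p := by
  set x := (4 : ℝ) ^ (-p / 3)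
  have hx0 : 0 ≤ x := by positivity
  have hx1 : x ≤ 1 := rpow_le_one_of_one_le_of_nonpos (by norm_num) (by linarith)
  have hA1 : (1 + x) ^ (-p / 2) ≤ 1 := rpow_le_one_of_one_le_of_nonpos (by linarith) (by linarith)
  have hB : exp (-gammaExponent p) ≤ exp (-(x / 2)) :=
    exp_le_exp.2 (by nlinarith [le_gammaExponent hp])
  have hquarter : x / 4 ≤ x / 2 / (1 + x / 2) := by
    rw [le_div_iff₀ (by linarith)]; nlinarith
  rw [gamma_eq]
  nlinarith [div_le_one_sub_exp_neg (by linarith : 0 ≤ x / 2),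
    mul_le_mul_of_nonneg_right hA1 (exp_pos (-gammaExponent p)).le]

/-- With `γ(p) = 1 - (1 + 4^{-p/3})^{-p/2} exp(-p·4^{p/3}(1 + 4^{p/3})/(2(4^p - 1)))`,
one has `γ(p)^{1/p} → 4^{-1/3}` as `p → ∞`. -/
theorem stmt_16 :
    Tendsto (fun q : ℕ =>
        (1 - (1 + (4 : ℝ) ^ (-(q : ℝ) / 3)) ^ (-(q : ℝ) / 2) *
            Real.exp (-(q : ℝ) * (4 : ℝ) ^ ((q : ℝ) / 3) * (1 + (4 : ℝ) ^ ((q : ℝ) / 3)) /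
              (2 * ((4 : ℝ) ^ (q : ℝ) - 1)))) ^ ((1 : ℝ) / (q : ℝ)))
      atTop (nhds ((4 : ℝ) ^ (-(1 : ℝ) / 3))) := by
  have hpow (p : ℝ) : ((4 : ℝ) ^ (-(1 : ℝ) / 3)) ^ p = (4 : ℝ) ^ (-p / 3) := by
    rw [← rpow_mul (by norm_num)]; ring_nf
  have hlim : Tendsto (fun p => gamma p ^ (1 / p)) atTop (𝓝 ((4 : ℝ) ^ (-(1 : ℝ) / 3))) := by
    refine tendsto_rpow_one_div_of_le_of_le (c := 1 / 4) (C := 3) (by positivity) (by norm_num)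
      (by norm_num) ?_ ?_
    · filter_upwards [eventually_ge_atTop 1] with p hp
      rw [hpow]; linarith [le_gamma hp]
    · filter_upwards [eventually_ge_atTop 1] with p hp
      rw [hpow]; exact gamma_le hp
  exact hlim.comp tendsto_natCast_atTop_atTop
end

section
/- Let G₁ and G₂ be Gamma densities with common shape a > 0 and rates b ≤ b' respectively, i.e., G₁(t) = b^a t^{a−1} e^{−bt}/Γ(a), G₂(t) = (b')^a t^{a−1} e^{−b't}/Γ(a). Then ∫₀^∞ |G₂(t) − G₁(t)| dt ≤ 2[((b')/b)^a − 1]. -/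
/-!
Since `exp (-b' t) ≤ exp (-b t)`, the densities satisfy `G₂ ≤ c G₁` with `c = (b'/b)^a`. For two
densities with `g ≤ c f` one has `|g - f| ≤ 2(c - 1) f + (f - g)` pointwise, and integrating this
bound gives `2(c - 1)`, because `f - g` integrates to zero.
-/

open MeasureTheory Real Set

theorem integral_abs_sub_le_of_le_const_mul {α : Type*} [MeasurableSpace α] {μ : Measure α}
    {f g : α → ℝ} {c : ℝ} (hf : Integrable f μ) (hg : Integrable g μ) (hc : 1 ≤ c)
    (hf_nonneg : 0 ≤ᵐ[μ] f) (hgf : ∀ᵐ x ∂μ, g x ≤ c * f x) (hfg : ∫ x, f x ∂μ = ∫ x, g x ∂μ) :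
    ∫ x, |g x - f x| ∂μ ≤ 2 * (c - 1) * ∫ x, f x ∂μ := by
  have hbound : ∀ᵐ x ∂μ, |g x - f x| ≤ 2 * (c - 1) * f x + (f x - g x) := by
    filter_upwards [hf_nonneg, hgf] with x hfx hgx
    rw [abs_le]
    have : 0 ≤ (c - 1) * f x := mul_nonneg (sub_nonneg.mpr hc) hfx
    constructor <;> linarith
  have hsub : Integrable (fun x ↦ f x - g x) μ := hf.sub hg
  calc ∫ x, |g x - f x| ∂μ
      ≤ ∫ x, 2 * (c - 1) * f x + (f x - g x) ∂μ :=
        integral_mono_ae (hg.sub hf).abs ((hf.const_mul _).add hsub) hbound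
    _ = 2 * (c - 1) * ∫ x, f x ∂μ := by
        rw [integral_add (hf.const_mul _) hsub, integral_sub hf hg, integral_const_mul,
          hfg, sub_self, add_zero]

/-- Unlike `ProbabilityTheory.gammaPDFReal` this is not truncated to `0` for `t < 0`, where the
real power `t ^ (a - 1)` takes junk values; it is only used on `Ioi 0`. -/
noncomputable def gammaDensity (a r t : ℝ) : ℝ :=
  r ^ a * t ^ (a - 1) * exp (-r * t) / Gamma a

section gammaDensity

variable {a r : ℝ}

theorem gammaDensity_eq (a r t : ℝ) :
    gammaDensity a r t = r ^ a / Gamma a * (t ^ (a - 1) * exp (-(r * t))) := by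
  rw [gammaDensity, neg_mul]
  ring

theorem gammaDensity_nonneg (hr : 0 ≤ r) (ha : 0 < a) {t : ℝ} (ht : 0 ≤ t) :
    0 ≤ gammaDensity a r t := by
  have := Gamma_pos_of_pos ha
  unfold gammaDensity
  positivity

theorem integrableOn_gammaDensity (ha : 0 < a) (hr : 0 < r) :
    IntegrableOn (gammaDensity a r) (Ioi 0) := by
  have h := integrableOn_rpow_mul_exp_neg_mul_rpow (s := a - 1) (by linarith) one_pos hr
  simp only [rpow_one, neg_mul] at h
  rw [funext (gammaDensity_eq a r)]
  exact h.const_mul _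

theorem integral_gammaDensity (ha : 0 < a) (hr : 0 < r) :
    ∫ t in Ioi 0, gammaDensity a r t = 1 := by
  have := (Gamma_pos_of_pos ha).ne'
  simp_rw [gammaDensity_eq]
  rw [integral_const_mul, integral_rpow_mul_exp_neg_mul_Ioi ha hr, div_rpow zero_le_one hr.le,
    one_rpow]
  field_simp

theorem gammaDensity_le_rpow_div_mul {b b' : ℝ} (ha : 0 < a) (hb : 0 < b) (hbb : b ≤ b')
    {t : ℝ} (ht : 0 ≤ t) :
    gammaDensity a b' t ≤ (b' / b) ^ a * gammaDensity a b t := by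
  have hb' : 0 < b' := hb.trans_le hbb
  have hexp : exp (-(b' * t)) ≤ exp (-(b * t)) := exp_le_exp.mpr (by nlinarith)
  have hscale : (b' / b) ^ a * (b ^ a / Gamma a) = b' ^ a / Gamma a := by
    rw [div_rpow hb'.le hb.le, ← mul_div_assoc, div_mul_cancel₀ _ (rpow_pos_of_pos hb a).ne']
  rw [gammaDensity_eq, gammaDensity_eq, ← mul_assoc ((b' / b) ^ a), hscale]
  have := Gamma_pos_of_pos ha
  gcongr

end gammaDensity

/-- The `L¹` distance between two Gamma densities with common shape `a` and rates `b ≤ b'` is at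
most `2((b'/b)^a - 1)`. -/
theorem stmt_19 (a b b' : ℝ) (ha : 0 < a) (hb : 0 < b) (hbb : b ≤ b')
    (G₁ G₂ : ℝ → ℝ)
    (hG₁ : ∀ t, G₁ t = b ^ a * t ^ (a - 1) * Real.exp (-b * t) / Real.Gamma a)
    (hG₂ : ∀ t, G₂ t = b' ^ a * t ^ (a - 1) * Real.exp (-b' * t) / Real.Gamma a) :
    ∫ t in Set.Ioi (0 : ℝ), |G₂ t - G₁ t| ≤ 2 * ((b' / b) ^ a - 1) := by
  have hb' : 0 < b' := hb.trans_le hbb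
  obtain rfl : G₁ = gammaDensity a b := funext hG₁
  obtain rfl : G₂ = gammaDensity a b' := funext hG₂
  have hratio : 1 ≤ (b' / b) ^ a := one_le_rpow ((one_le_div hb).mpr hbb) ha.le
  have hdom : ∀ᵐ t ∂volume.restrict (Ioi 0),
      gammaDensity a b' t ≤ (b' / b) ^ a * gammaDensity a b t :=
    ae_restrict_of_forall_mem measurableSet_Ioi fun t ht ↦
      gammaDensity_le_rpow_div_mul ha hb hbb ht.le
  have hnonneg : 0 ≤ᵐ[volume.restrict (Ioi 0)] gammaDensity a b :=
    ae_restrict_of_forall_mem measurableSet_Ioi fun t ht ↦ gammaDensity_nonneg hb.le ha ht.le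
  simpa only [integral_gammaDensity ha hb, mul_one] using
    integral_abs_sub_le_of_le_const_mul (integrableOn_gammaDensity ha hb)
      (integrableOn_gammaDensity ha hb') hratio hnonneg hdom
      (by rw [integral_gammaDensity ha hb, integral_gammaDensity ha hb'])
end
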